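/- For every φ ∈ P one has Y²(W^Sφ) = 0, and consequently q^{20}(W^Sφ) = 0; i.e., the spinor-valued 2-form W^Sφ built from a symplectic Weyl-type tensor lies in the summand E^{21} ⊕ E^{22}. -/

import Mathlib

noncomputable section

open Finset MvPolynomial

/-- The space of symplectic spinors: complex polynomials in `l` variables. -/
abbrev Pol (l : ℕ) := MvPolynomial (Fin l) ℂ

/-- Components `ω_{ij}` of the standard symplectic form on `ℝ^{2l}`. -/
def om (l : ℕ) (i j : Fin (2*l)) : ℝ :=
  if (j : ℕ) = (i : ℕ) + l then 1 else if (i : ℕ) = (j : ℕ) + l then -1 else 0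

/-- Components `ω^{ij}`, defined by `Σ_k ω_{ik} ω^{jk} = δ_i^j`. -/
def omUp (l : ℕ) (i j : Fin (2*l)) : ℝ :=
  if (j : ℕ) = (i : ℕ) + l then 1 else if (i : ℕ) = (j : ℕ) + l then -1 else 0

/-- Symplectic Clifford multiplication by a basis vector `e_i`. -/
def cliff (l : ℕ) (i : Fin (2*l)) (f : Pol l) : Pol l :=
  if h : (i : ℕ) < l then Complex.I • (MvPolynomial.X (⟨(i : ℕ), h⟩ : Fin l) * f)
  else MvPolynomial.pderiv (⟨(i : ℕ) - l, by have := i.isLt; omega⟩ : Fin l) f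

/-- Symplectic Clifford multiplication by an arbitrary vector, extended ℝ-bilinearly. -/
def cliffV (l : ℕ) (v : Fin (2*l) → ℝ) (f : Pol l) : Pol l :=
  ∑ i, ((v i : ℝ) : ℂ) • cliff l i f

/-- Symplectic-spinor-valued `r`-forms (as functions of their `r` vector arguments). -/
abbrev Form (l r : ℕ) := (Fin r → (Fin (2*l) → ℝ)) → Pol l

/-- The standard basis vector `e_i` of `ℝ^{2l}`. -/
def basisVec (l : ℕ) (i : Fin (2*l)) : Fin (2*l) → ℝ := Pi.single i 1

/-- The operator `X`: `(Xφ)(v_1,…,v_{r+1}) = −Σ_a (−1)^{a+1} v_a · φ(v_1,…,v̂_a,…,v_{r+1})`. -/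
def Xop (l r : ℕ) (φ : Form l r) : Form l (r+1) :=
  fun v => -∑ a : Fin (r+1), ((-1 : ℂ)^(a : ℕ)) • cliffV l (v a) (φ (fun b => v (a.succAbove b)))

/-- The operator `Y`: `(Yφ)(v_1,…,v_r) = Σ_{i,j} ω^{ij} e_j · φ(e_i, v_1,…,v_r)`. -/
def Yop (l r : ℕ) (φ : Form l (r+1)) : Form l r :=
  fun v => ∑ i, ∑ j, ((omUp l i j : ℝ) : ℂ) • cliff l j (φ (Fin.cons (basisVec l i) v))

/-- The operator `H = XY + YX` (on 0-forms `Y` vanishes, so there `H = YX`). -/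
def Hop (l : ℕ) : {r : ℕ} → Form l r → Form l r
  | 0, φ => Yop l 0 (Xop l 0 φ)
  | (r+1), φ => Xop l r (Yop l r φ) + Yop l (r+1) (Xop l (r+1) φ)

/-- `X²Y²` on spinor-valued 2-forms. -/
def XXYY (l : ℕ) (φ : Form l 2) : Form l 2 := Xop l 1 (Xop l 0 (Yop l 0 (Yop l 1 φ)))

/-- `XY` on spinor-valued 2-forms. -/
def XY2 (l : ℕ) (φ : Form l 2) : Form l 2 := Xop l 1 (Yop l 1 φ)

/-- The projection `q^{20} = (1/l) X²Y²`. -/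
def q20 (l : ℕ) (φ : Form l 2) : Form l 2 := ((l : ℂ))⁻¹ • XXYY l φ

/-- The projection `q^{21} = (𝕚/(1−l)) (XY − (𝕚/l) X²Y²)`. -/
def q21 (l : ℕ) (φ : Form l 2) : Form l 2 :=
  (Complex.I / (1 - (l : ℂ))) • (XY2 l φ - (Complex.I / (l : ℂ)) • XXYY l φ)

/-- The projection `q^{22} = Id − q^{20} − q^{21}`. -/
def q22 (l : ℕ) (φ : Form l 2) : Form l 2 := φ - q20 l φ - q21 l φ

/-- The spinor-valued 2-form `c · ε^k ∧ ε^m ⊗ s`. -/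
def w2 (l : ℕ) (c : ℝ) (k m : Fin (2*l)) (s : Pol l) : Form l 2 :=
  fun v => ((c * (v 0 k * v 1 m - v 0 m * v 1 k) : ℝ) : ℂ) • s

/-- The symplectic Ricci tensor `σ_{ij} = Σ_{k,m} ω^{km} R_{mjki}`. -/
def ric (l : ℕ) (R : Fin (2*l) → Fin (2*l) → Fin (2*l) → Fin (2*l) → ℝ)
    (i j : Fin (2*l)) : ℝ :=
  ∑ k, ∑ m, omUp l k m * R m j k i

/-- `σ̃_{ijkl}` built from a symmetric tensor `σ`. -/
def st (l : ℕ) (σ : Fin (2*l) → Fin (2*l) → ℝ) (i j k m : Fin (2*l)) : ℝ :=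
  (1/(2*((l : ℝ)+1))) * (om l i m * σ j k - om l i k * σ j m
    + om l j m * σ i k - om l j k * σ i m + 2 * σ i j * om l k m)

/-- The symplectic Weyl tensor `W = R − σ̃`. -/
def weyl (l : ℕ) (R : Fin (2*l) → Fin (2*l) → Fin (2*l) → Fin (2*l) → ℝ)
    (i j k m : Fin (2*l)) : ℝ :=
  R i j k m - st l (ric l R) i j k m

/-- Raising all four indices: `T^{ijkm} = Σ ω^{ia}ω^{jb}ω^{kc}ω^{md} T_{abcd}`. -/
def upT (l : ℕ) (T : Fin (2*l) → Fin (2*l) → Fin (2*l) → Fin (2*l) → ℝ)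
    (i j k m : Fin (2*l)) : ℝ :=
  ∑ a, ∑ b, ∑ c, ∑ d, omUp l i a * omUp l j b * omUp l k c * omUp l m d * T a b c d

/-- Raising both indices of a 2-tensor: `σ^{ij} = Σ ω^{ia}ω^{jb} σ_{ab}`. -/
def up2 (l : ℕ) (σ : Fin (2*l) → Fin (2*l) → ℝ) (i j : Fin (2*l)) : ℝ :=
  ∑ a, ∑ b, omUp l i a * omUp l j b * σ a b

/-- The spinor-valued 2-form `(𝕚/2) Σ T^{ij}_{kl} ε^k ∧ ε^l ⊗ e_{ij}·φ` built from a
4-tensor `T` (used for `R^S φ`, `σ^S φ` and `W^S φ`). -/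
def curvS (l : ℕ) (T : Fin (2*l) → Fin (2*l) → Fin (2*l) → Fin (2*l) → ℝ)
    (φ : Pol l) : Form l 2 :=
  (Complex.I/2) • ∑ i, ∑ j, ∑ k, ∑ m,
    w2 l (∑ a, ∑ b, omUp l i a * omUp l j b * T a b k m) k m (cliff l i (cliff l j φ))

/-- The spinor-valued 2-form `Σ_{i,j,k,d,m} T^{ijk}_d ε^m ∧ ε^d ⊗ e_{mkij}·φ`. -/
def mixS (l : ℕ) (T : Fin (2*l) → Fin (2*l) → Fin (2*l) → Fin (2*l) → ℝ)
    (φ : Pol l) : Form l 2 :=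
  ∑ i, ∑ j, ∑ k, ∑ d, ∑ m,
    w2 l (∑ a, ∑ b, ∑ c, omUp l i a * omUp l j b * omUp l k c * T a b c d) m d
      (cliff l m (cliff l k (cliff l i (cliff l j φ))))

/-!
Unwinding both contractions gives
`Y²(W^S φ) = 𝕚 Σ_{i,j} Σ_{b,d} W^{ijbd} e_d e_b e_{ij}·φ`.
For fixed `i, j` the coefficient `W^{ijbd}` is antisymmetric in `b, d`, so the inner sum only sees
the commutators `e_d e_b − e_b e_d = −𝕚 ω_{db}` and collapses to a multiple of the trace
`Σ_{b,d} W^{ijbd} ω_{bd}`, which vanishes. Since `q^{20} = (1/l) X²Y²`, it kills `W^S φ` as well.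
-/

theorem MvPolynomial.pderiv_pderiv_comm {R σ : Type*} [CommSemiring R] (i j : σ)
    (f : MvPolynomial σ R) : pderiv i (pderiv j f) = pderiv j (pderiv i f) := by
  classical
  induction f using MvPolynomial.induction_on with
  | C a => simp
  | add f g hf hg => simp [hf, hg]
  | mul_X f k hf =>
    simp only [pderiv_mul, map_add, hf, pderiv_X, Pi.single_apply]
    split_ifs <;> simp
    abel

theorem Fintype.sum_sum_comm_sum_sum {α β γ δ M : Type*} [Fintype α] [Fintype β] [Fintype γ]
    [Fintype δ] [AddCommMonoid M] (f : α → β → γ → δ → M) :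
    ∑ a, ∑ b, ∑ c, ∑ d, f a b c d = ∑ c, ∑ d, ∑ a, ∑ b, f a b c d :=
  calc ∑ a, ∑ b, ∑ c, ∑ d, f a b c d = ∑ p : α × β, ∑ q : γ × δ, f p.1 p.2 q.1 q.2 := by
        simp only [Fintype.sum_prod_type]
    _ = ∑ q : γ × δ, ∑ p : α × β, f p.1 p.2 q.1 q.2 := Finset.sum_comm
    _ = ∑ c, ∑ d, ∑ a, ∑ b, f a b c d := by simp only [Fintype.sum_prod_type]

section

variable {l : ℕ}

theorem om_antisymm (i j : Fin (2*l)) : om l i j = -om l j i := by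
  unfold om
  split_ifs <;> first | omega | norm_num

theorem omUp_antisymm (i j : Fin (2*l)) : omUp l i j = -omUp l j i :=
  om_antisymm i j

variable (l) in
def cliffLinear (i : Fin (2*l)) : Pol l →ₗ[ℂ] Pol l where
  toFun := cliff l i
  map_add' f g := by unfold cliff; split <;> simp [mul_add]
  map_smul' c f := by unfold cliff; split <;> simp [smul_comm c]

theorem cliff_smul (i : Fin (2*l)) (c : ℂ) (f : Pol l) : cliff l i (c • f) = c • cliff l i f :=
  (cliffLinear l i).map_smul c f

theorem cliff_sum {α : Type*} (i : Fin (2*l)) (s : Finset α) (f : α → Pol l) :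
    cliff l i (∑ a ∈ s, f a) = ∑ a ∈ s, cliff l i (f a) :=
  map_sum (cliffLinear l i) f s

theorem cliff_zero (i : Fin (2*l)) : cliff l i 0 = 0 :=
  map_zero (cliffLinear l i)

theorem Xop_zero (r : ℕ) : Xop l r (0 : Form l r) = 0 := by
  funext v
  simp [Xop, cliffV, cliff_zero]

theorem cliff_cliff_sub_cliff_cliff (i j : Fin (2*l)) (f : Pol l) :
    cliff l i (cliff l j f) - cliff l j (cliff l i f) = (-Complex.I * om l i j) • f := by
  have mixed : ∀ i j : Fin (2*l), (i : ℕ) < l → l ≤ (j : ℕ) → ∀ f : Pol l,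
      cliff l i (cliff l j f) - cliff l j (cliff l i f) = (-Complex.I * om l i j) • f := by
    intro i j hi hj f
    -- with `p = i`, `q = j − l`: `𝕚 (x_p ∂_q f − ∂_q (x_p f)) = −𝕚 δ_{pq} f`
    have hom : om l i j = if (j : ℕ) = i + l then 1 else 0 := by
      unfold om; split_ifs <;> first | rfl | omega
    simp only [cliff, dif_pos hi, dif_neg (not_lt.2 hj), Derivation.map_smul, Derivation.leibniz,
      pderiv_X, Pi.single_apply, hom, Fin.ext_iff, smul_eq_mul, mul_ite, mul_one, mul_zero]
    split_ifs <;> first | omega | module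
  rcases lt_or_ge (i : ℕ) l with hi | hi <;> rcases lt_or_ge (j : ℕ) l with hj | hj
  · have : om l i j = 0 := by unfold om; split_ifs <;> first | rfl | omega
    simp only [cliff, dif_pos hi, dif_pos hj, this, mul_smul_comm]
    rw [mul_left_comm (X _)]
    simp
  · exact mixed i j hi hj f
  · rw [← neg_sub, mixed j i hj hi f, om_antisymm j i]
    push_cast
    module
  · have : om l i j = 0 := by unfold om; split_ifs <;> first | rfl | omega
    simp [cliff, not_lt.2 hi, not_lt.2 hj, this, pderiv_pderiv_comm]

theorem sum_smul_cliff_cliff_eq_zero (T : Fin (2*l) → Fin (2*l) → ℝ)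
    (hT : ∀ b d, T b d = -T d b) (htr : ∑ b, ∑ d, T b d * om l b d = 0) (g : Pol l) :
    ∑ d, ∑ b, (T b d : ℂ) • cliff l d (cliff l b g) = 0 := by
  rw [Finset.sum_comm]
  set S := ∑ b, ∑ d, (T b d : ℂ) • cliff l d (cliff l b g)
  have hswap : ∑ b, ∑ d, (T b d : ℂ) • cliff l b (cliff l d g) = -S := by
    rw [Finset.sum_comm, ← sum_neg_distrib]
    refine sum_congr rfl fun b _ => ?_
    simp only [← sum_neg_distrib, ← neg_smul, ← Complex.ofReal_neg, ← hT]
  have hcomm : S - ∑ b, ∑ d, (T b d : ℂ) • cliff l b (cliff l d g)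
      = (Complex.I * ((∑ b, ∑ d, T b d * om l b d : ℝ) : ℂ)) • g := by
    simp only [S, ← sum_sub_distrib, ← smul_sub, cliff_cliff_sub_cliff_cliff, smul_smul,
      ← sum_smul]
    push_cast
    simp only [mul_sum]
    congr 1
    refine sum_congr rfl fun b _ => sum_congr rfl fun d _ => ?_
    rw [om_antisymm d b]
    push_cast
    ring
  rw [hswap, htr, sub_neg_eq_add, Complex.ofReal_zero, mul_zero, zero_smul] at hcomm
  simpa using hcomm

theorem Yop_Yop_apply (ψ : Form l 2) (v : Fin 0 → Fin (2*l) → ℝ) :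
    Yop l 0 (Yop l 1 ψ) v = ∑ d, ∑ b, cliff l d (cliff l b
      (∑ c, ∑ a, ((omUp l c d * omUp l a b : ℝ) : ℂ) • ψ ![basisVec l a, basisVec l c])) := by
  have hv : ∀ a c, (Fin.cons (basisVec l a) (Fin.cons (basisVec l c) v) : Fin 2 → _)
      = ![basisVec l a, basisVec l c] := by
    intro a c
    rw [Subsingleton.elim v ![]]
    rfl
  simp only [Yop, hv, cliff_sum, cliff_smul, smul_sum, smul_smul, Complex.ofReal_mul]
  rw [Finset.sum_comm]
  refine sum_congr rfl fun d _ => ?_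
  conv_rhs => rw [Finset.sum_comm]
  exact sum_congr rfl fun c _ => Finset.sum_comm

theorem sum_sum_w2_apply_basisVec (C : Fin (2*l) → Fin (2*l) → ℝ) (s : Pol l) (a c : Fin (2*l)) :
    ∑ k, ∑ m, w2 l (C k m) k m s ![basisVec l a, basisVec l c] = ((C a c - C c a : ℝ) : ℂ) • s := by
  simp [w2, basisVec, Pi.single_apply, mul_sub, sum_sub_distrib, sub_smul]

variable (l) in
def raiseFirstTwo (T : Fin (2*l) → Fin (2*l) → Fin (2*l) → Fin (2*l) → ℝ)
    (i j k m : Fin (2*l)) : ℝ :=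
  ∑ a, ∑ b, omUp l i a * omUp l j b * T a b k m

variable {T : Fin (2*l) → Fin (2*l) → Fin (2*l) → Fin (2*l) → ℝ}

theorem curvS_apply_basisVec (hT : ∀ i j k m, T i j k m = -T i j m k) (φ : Pol l) (a c : Fin (2*l)) :
    curvS l T φ ![basisVec l a, basisVec l c]
      = Complex.I • ∑ i, ∑ j, (raiseFirstTwo l T i j a c : ℂ) • cliff l i (cliff l j φ) := by
  have hanti : ∀ i j, raiseFirstTwo l T i j c a = -raiseFirstTwo l T i j a c := by
    intro i j
    simp only [raiseFirstTwo, hT _ _ c a, mul_neg, sum_neg_distrib]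
  simp only [curvS, Pi.smul_apply, Finset.sum_apply, sum_sum_w2_apply_basisVec,
    ← raiseFirstTwo.eq_1, hanti, sub_neg_eq_add, ← two_mul, Complex.ofReal_mul, mul_smul,
    ← smul_sum]
  push_cast
  module

theorem upT_eq_sum_sum_raiseFirstTwo (i j b d : Fin (2*l)) :
    upT l T i j b d = ∑ c, ∑ a, omUp l c d * omUp l a b * raiseFirstTwo l T i j a c := by
  simp only [upT, raiseFirstTwo, mul_sum]
  conv_rhs => rw [Finset.sum_comm, Fintype.sum_sum_comm_sum_sum]
  refine sum_congr rfl fun p _ => sum_congr rfl fun q _ =>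
    sum_congr rfl fun a _ => sum_congr rfl fun c _ => ?_
  rw [omUp_antisymm b a, omUp_antisymm d c]
  ring

theorem upT_eq_neg_swap (hT : ∀ i j k m, T i j k m = -T i j m k) (i j k m : Fin (2*l)) :
    upT l T i j k m = -upT l T i j m k := by
  simp only [upT, ← sum_neg_distrib]
  refine sum_congr rfl fun a _ => sum_congr rfl fun b _ => ?_
  rw [Finset.sum_comm]
  refine sum_congr rfl fun c _ => sum_congr rfl fun d _ => ?_
  rw [hT a b d c]
  ring

theorem Yop_Yop_curvS_eq_zero (hT : ∀ i j k m, T i j k m = -T i j m k)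
    (htr : ∀ i j, ∑ k, ∑ m, upT l T i j k m * om l k m = 0) (φ : Pol l) :
    Yop l 0 (Yop l 1 (curvS l T φ)) = 0 := by
  have hcontract : ∀ b d, ∑ c, ∑ a, ((omUp l c d * omUp l a b : ℝ) : ℂ) •
      curvS l T φ ![basisVec l a, basisVec l c]
        = Complex.I • ∑ i, ∑ j, (upT l T i j b d : ℂ) • cliff l i (cliff l j φ) := by
    intro b d
    simp only [curvS_apply_basisVec hT, upT_eq_sum_sum_raiseFirstTwo, smul_sum, smul_smul,
      Complex.ofReal_sum, Complex.ofReal_mul, sum_smul]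
    rw [Fintype.sum_sum_comm_sum_sum]
    refine sum_congr rfl fun i _ => sum_congr rfl fun j _ =>
      sum_congr rfl fun c _ => sum_congr rfl fun a _ => ?_
    congr 1
    ring
  funext v
  simp only [Yop_Yop_apply, hcontract, cliff_smul, cliff_sum, ← smul_sum, Pi.zero_apply]
  rw [Fintype.sum_sum_comm_sum_sum, sum_eq_zero fun i _ => sum_eq_zero fun j _ =>
    sum_smul_cliff_cliff_eq_zero _ (upT_eq_neg_swap hT i j) (htr i j) _, smul_zero]

end

theorem stmt_12_general (l : ℕ) (W : Fin (2*l) → Fin (2*l) → Fin (2*l) → Fin (2*l) → ℝ)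
    (hW2 : ∀ i j k m, W i j k m = - W i j m k)
    (hW10 : ∀ i j, ∑ k, ∑ m, upT l W i j k m * om l k m = 0)
    (φ : Pol l) :
    Yop l 0 (Yop l 1 (curvS l W φ)) = 0 ∧ q20 l (curvS l W φ) = 0 := by
  have hY := Yop_Yop_curvS_eq_zero hW2 hW10 φ
  refine ⟨hY, ?_⟩
  rw [q20, XXYY, hY, Xop_zero, Xop_zero, smul_zero]

/-- `Y²(W^S φ) = 0` and consequently `q^{20}(W^S φ) = 0`. -/
theorem stmt_12 (l : ℕ) (hl : 2 ≤ l) (W : Fin (2*l) → Fin (2*l) → Fin (2*l) → Fin (2*l) → ℝ)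
    (hW1 : ∀ i j k m, W i j k m = W j i k m)
    (hW2 : ∀ i j k m, W i j k m = - W i j m k)
    (hW3 : ∀ i j k m, W i j k m + W i k m j + W i m j k = 0)
    (hW4 : ∀ i j k m, W i j k m + W j k m i + W k m i j + W m i j k = 0)
    (hW5 : ∀ k m, ∑ i, ∑ j, upT l W i j k m * om l i j = 0)
    (hW6 : ∀ j m, ∑ i, ∑ k, upT l W i j k m * om l i k = 0)
    (hW7 : ∀ j k, ∑ i, ∑ m, upT l W i j k m * om l i m = 0)
    (hW8 : ∀ i m, ∑ j, ∑ k, upT l W i j k m * om l j k = 0)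
    (hW9 : ∀ i k, ∑ j, ∑ m, upT l W i j k m * om l j m = 0)
    (hW10 : ∀ i j, ∑ k, ∑ m, upT l W i j k m * om l k m = 0)
    (φ : Pol l) :
    Yop l 0 (Yop l 1 (curvS l W φ)) = 0 ∧ q20 l (curvS l W φ) = 0 :=
  stmt_12_general l W hW2 hW10 φ
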